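/- arXiv:0910.3584 — 3 statements merged into one kernel-verified Lean document; each statement's English description precedes it below -/
import Mathlib

section
/- Let (X,P) be an irreducible transitive reversible Markov chain with reversible measure π. Then for every γ ∈ AUT(X,P) the ratio g(γ) := π(γx)/π(x) does not depend on the choice of x ∈ X, and the resulting function g is an exponential on AUT(X,P), i.e. g(βγ)=g(β)g(γ) for all β,γ ∈ AUT(X,P); consequently the function f(γ) := r(γx,γy)/r(x,y) = 1/g(γ) on resistances is also an exponential. -/
/-!
Reversibility gives `π x p(x,y) = π y p(y,x)`, and for an automorphism `γ` also
`π (γ x) p(x,y) = π (γ y) p(y,x)`. Dividing these along an edge `p(x,y) ≠ 0` shows that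
`π (γ x) / π x` is the same at both endpoints, so by irreducibility it is constant. Constancy of
`g(β) = π (β ·) / π ·` evaluated at `γ x` and at `x` gives `g(βγ) = g(β) g(γ)`, and
`r(γx,γy) / r(x,y) = π x / π (γ x)` because `γ` preserves `p`.
-/

namespace Relation.ReflTransGen

theorem eq_of_map_eq_of_rel {α β : Type*} {r : α → α → Prop} {x y : α} (f : α → β)
    (hf : ∀ a b, r a b → f a = f b) (hxy : ReflTransGen r x y) : f x = f y := by
  rw [← reflTransGen_eq_self (r := @Eq β)]
  exact hxy.lift f hf

end Relation.ReflTransGen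

section Reversible

variable {X : Type*} {p : X → X → ℝ} {π : X → ℝ} {γ : X → X}

theorem ratio_eq_of_adj (hπ : ∀ x, π x ≠ 0) (hrev : ∀ x y, π x * p x y = π y * p y x)
    (hγ : ∀ a b, p (γ a) (γ b) = p a b) {a b : X} (hab : p a b ≠ 0) :
    π (γ a) / π a = π (γ b) / π b := by
  have hrevγ : π (γ a) * p a b = π (γ b) * p b a := by
    rw [← hγ a b, ← hγ b a]
    exact hrev (γ a) (γ b)
  rw [div_eq_div_iff (hπ a) (hπ b)]
  apply mul_right_cancel₀ hab
  linear_combination π b * hrevγ - π (γ b) * hrev a b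

theorem ratio_eq_of_reflTransGen (hπ : ∀ x, π x ≠ 0) (hrev : ∀ x y, π x * p x y = π y * p y x)
    (hγ : ∀ a b, p (γ a) (γ b) = p a b) {x y : X}
    (hxy : Relation.ReflTransGen (fun a b => 0 < p a b) x y) :
    π (γ x) / π x = π (γ y) / π y :=
  hxy.eq_of_map_eq_of_rel (fun a => π (γ a) / π a) fun _ _ hab =>
    ratio_eq_of_adj hπ hrev hγ hab.ne'

theorem ratio_mul_of_ratio_eq {β : X → X} {x : X} (hγx : π (γ x) ≠ 0)
    (hβ : π (β (γ x)) / π (γ x) = π (β x) / π x) :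
    π (β (γ x)) / π x = π (β x) / π x * (π (γ x) / π x) := by
  rw [← hβ, div_mul_div_cancel₀ hγx]

theorem resistance_ratio_eq_inv_ratio (hγ : ∀ a b, p (γ a) (γ b) = p a b) {x y : X}
    (hx : π x ≠ 0) (hγx : π (γ x) ≠ 0) (hxy : p x y ≠ 0) :
    (1 / (π (γ x) * p (γ x) (γ y))) / (1 / (π x * p x y)) = (π (γ x) / π x)⁻¹ := by
  rw [hγ x y]
  field_simp [hx, hγx, hxy]

end Reversible

theorem reversible_transitive_exponential_general
    {X : Type*} (p : X → X → ℝ) (π : X → ℝ)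
    (hπ_pos : ∀ x, 0 < π x)
    (hrev : ∀ x y, π x * p x y = π y * p y x)
    (hirr : ∀ x y : X, Relation.ReflTransGen (fun a b => 0 < p a b) x y) :
    -- g(γ) := π(γ x)/π(x) does not depend on x
    (∀ γ : X ≃ X, (∀ a b, p (γ a) (γ b) = p a b) →
      ∀ x y : X, π (γ x) / π x = π (γ y) / π y) ∧
    -- g is an exponential on AUT(X,P): g(β∘γ) = g(β) * g(γ)
    (∀ β γ : X ≃ X, (∀ a b, p (β a) (β b) = p a b) → (∀ a b, p (γ a) (γ b) = p a b) →
      ∀ x : X, π (β (γ x)) / π x = (π (β x) / π x) * (π (γ x) / π x)) ∧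
    -- f(γ) := r(γx,γy)/r(x,y) = 1/g(γ), where r(x,y) = 1/(π(x) p(x,y)),
    -- so f is an exponential as well
    (∀ γ : X ≃ X, (∀ a b, p (γ a) (γ b) = p a b) →
      ∀ x y : X, 0 < p x y →
        (1 / (π (γ x) * p (γ x) (γ y))) / (1 / (π x * p x y)) = (π (γ x) / π x)⁻¹) := by
  have hπ : ∀ x, π x ≠ 0 := fun x => (hπ_pos x).ne'
  have ratio_const : ∀ γ : X ≃ X, (∀ a b, p (γ a) (γ b) = p a b) →
      ∀ x y : X, π (γ x) / π x = π (γ y) / π y :=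
    fun γ hγ x y => ratio_eq_of_reflTransGen hπ hrev hγ (hirr x y)
  refine ⟨ratio_const, ?_, ?_⟩
  · intro β γ hβ _ x
    exact ratio_mul_of_ratio_eq (hπ (γ x)) (ratio_const β hβ (γ x) x)
  · intro γ hγ x y hxy
    exact resistance_ratio_eq_inv_ratio hγ (hπ x) (hπ (γ x)) hxy.ne'

theorem reversible_transitive_exponential
    {X : Type*} (p : X → X → ℝ) (π : X → ℝ)
    (hp_nonneg : ∀ x y, 0 ≤ p x y)
    (hp_row : ∀ x, HasSum (p x) 1)
    (hπ_pos : ∀ x, 0 < π x)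
    (hrev : ∀ x y, π x * p x y = π y * p y x)
    (hirr : ∀ x y : X, Relation.ReflTransGen (fun a b => 0 < p a b) x y)
    (htrans : ∀ x y : X, ∃ γ : X ≃ X, (∀ a b, p (γ a) (γ b) = p a b) ∧ γ x = y) :
    -- g(γ) := π(γ x)/π(x) does not depend on x
    (∀ γ : X ≃ X, (∀ a b, p (γ a) (γ b) = p a b) →
      ∀ x y : X, π (γ x) / π x = π (γ y) / π y) ∧
    -- g is an exponential on AUT(X,P): g(β∘γ) = g(β) * g(γ)
    (∀ β γ : X ≃ X, (∀ a b, p (β a) (β b) = p a b) → (∀ a b, p (γ a) (γ b) = p a b) →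
      ∀ x : X, π (β (γ x)) / π x = (π (β x) / π x) * (π (γ x) / π x)) ∧
    -- f(γ) := r(γx,γy)/r(x,y) = 1/g(γ), where r(x,y) = 1/(π(x) p(x,y)),
    -- so f is an exponential as well
    (∀ γ : X ≃ X, (∀ a b, p (γ a) (γ b) = p a b) →
      ∀ x y : X, 0 < p x y →
        (1 / (π (γ x) * p (γ x) (γ y))) / (1 / (π x * p x y)) = (π (γ x) / π x)⁻¹) :=
  reversible_transitive_exponential_general p π hπ_pos hrev hirr
end

section
/- Let G_1 and G_2 be two infinite roughly isometric networks with conductances c_1 and c_2. If c_1, c_2, c_1^{-1}, c_2^{-1} are all bounded and the vertex degrees in G_1 and G_2 are all bounded, then G_1 is roughly equivalent to G_2. -/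
/-!
Perturb the rough isometry `φ` by a bounded amount so that adjacent vertices get distinct
images: the infinite connected target has `D + 1` vertices within distance `D` of each `φ x`,
and a greedy choice along a well-order avoids the at most `D` values already used on
neighbours. Geodesics between the images of adjacent vertices are then non-trivial paths of
bounded length, which with bounded conductances gives the resistance bound. A rough isometry
is uniformly finite-to-one at bounded scales, so all paths through a given edge start at
vertices of a ball of bounded radius in a graph of bounded degree, which bounds the
congestion. A quasi-inverse of `φ` is again a rough isometry and gives the other direction.
-/

open scoped ENNReal

/-- `φ` is a rough isometry from `(G, dist)` to `(H, dist)`. -/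
def IsRoughIsometry {V W : Type*} (G : SimpleGraph V) (H : SimpleGraph W)
    (φ : V → W) : Prop :=
  ∃ α : ℝ, 0 < α ∧ ∃ β : ℝ, 0 ≤ β ∧
    (∀ x y : V, α⁻¹ * (G.dist x y : ℝ) - β ≤ (H.dist (φ x) (φ y) : ℝ) ∧
      ((H.dist (φ x) (φ y) : ℝ) ≤ α * (G.dist x y : ℝ) + β)) ∧
    ∀ w : W, ∃ x : V, ((H.dist w (φ x) : ℝ) ≤ β)

/-- The sum of the resistances `r₂` along (the oriented edges of) a walk. -/
noncomputable def pathResistance {W : Type*} {G : SimpleGraph W}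
    (r₂ : W → W → ℝ≥0∞) {u v : W} (w : G.Walk u v) : ℝ≥0∞ :=
  (w.darts.map (fun d => r₂ d.toProd.1 d.toProd.2)).sum

/-- `φ`, together with the path assignment `Φ`, is a rough embedding from the
network `(G₁, r₁)` to the network `(G₂, r₂)` (resistances). -/
def IsRoughEmbedding {V W : Type*} (G₁ : SimpleGraph V) (G₂ : SimpleGraph W)
    (r₁ : V → V → ℝ≥0∞) (r₂ : W → W → ℝ≥0∞) (φ : V → W)
    (Φ : ∀ ⦃x y : V⦄, G₁.Adj x y → G₂.Walk (φ x) (φ y)) : Prop :=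
  (∀ ⦃x y : V⦄ (h : G₁.Adj x y), (Φ h).IsPath ∧ 0 < (Φ h).length) ∧
  (∀ ⦃x y : V⦄ (h : G₁.Adj x y), Φ h.symm = (Φ h).reverse) ∧
  (∃ a : ℝ≥0∞, a ≠ ∞ ∧ ∀ ⦃x y : V⦄ (h : G₁.Adj x y),
    pathResistance r₂ (Φ h) ≤ a * r₁ x y) ∧
  (∃ b : ℕ, ∀ e₂ : Sym2 W,
    {pr : V × V | ∃ h : G₁.Adj pr.1 pr.2, e₂ ∈ (Φ h).edges}.Finite ∧
    {pr : V × V | ∃ h : G₁.Adj pr.1 pr.2, e₂ ∈ (Φ h).edges}.ncard ≤ b)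

namespace SimpleGraph

open Finset

variable {V W : Type*} {G : SimpleGraph V}

theorem Connected.dist_le_add_add (hG : G.Connected) (a b c d : V) :
    G.dist a d ≤ G.dist a b + G.dist b c + G.dist c d :=
  hG.dist_triangle.trans (Nat.add_le_add_right hG.dist_triangle _)

theorem Walk.dist_le_length_of_mem_support {u v w : V} (p : G.Walk u v)
    (hw : w ∈ p.support) : G.dist u w ≤ p.length := by
  classical
  exact (dist_le _).trans (p.length_takeUntil_le_length hw)

theorem Connected.exists_dist_eq_of_le (hG : G.Connected) {v y : V} {n : ℕ}
    (hn : n ≤ G.dist v y) : ∃ x, G.dist v x = n := by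
  obtain ⟨p, hp⟩ := hG.exists_walk_length_eq_dist v y
  refine ⟨p.getVert n, le_antisymm ?_ ?_⟩
  · simpa [Walk.take_length, hp, hn] using dist_le (p.take n)
  · have := (dist_le (p.drop n)).trans_eq (p.drop_length n)
    have := hG.dist_triangle (u := v) (v := p.getVert n) (w := y)
    omega

section walkBall

variable (G) [G.LocallyFinite] [DecidableEq V]

def walkBall : V → ℕ → Finset V
  | v, 0 => {v}
  | v, n + 1 => insert v ((G.neighborFinset v).biUnion fun w => walkBall w n)

variable {G}

theorem Walk.mem_walkBall {v x : V} (p : G.Walk v x) {n : ℕ} (hn : p.length ≤ n) :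
    x ∈ G.walkBall v n := by
  induction p generalizing n with
  | nil => cases n <;> simp [walkBall]
  | cons h p ih =>
    obtain ⟨n, rfl⟩ : ∃ k, n = k + 1 := ⟨n - 1, by simp at hn; omega⟩
    simp only [walkBall, mem_insert, mem_biUnion, mem_neighborFinset]
    exact Or.inr ⟨_, h, ih (by simpa using hn)⟩

theorem Connected.mem_walkBall_of_dist_le (hG : G.Connected) {v x : V} {n : ℕ}
    (h : G.dist v x ≤ n) : x ∈ G.walkBall v n := by
  obtain ⟨p, hp⟩ := hG.exists_walk_length_eq_dist v x
  exact p.mem_walkBall (hp ▸ h)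

theorem card_walkBall_le {D : ℕ} (hD : ∀ v, G.degree v ≤ D) (v : V) (n : ℕ) :
    #(G.walkBall v n) ≤ (D + 1) ^ n := by
  induction n generalizing v with
  | zero => simp [walkBall]
  | succ n ih =>
    calc #(G.walkBall v (n + 1))
        ≤ 1 + #(G.neighborFinset v) * (D + 1) ^ n :=
          (card_insert_le _ _).trans <| by
            rw [add_comm]; gcongr; exact card_biUnion_le_card_mul _ _ _ fun w _ => ih w
      _ ≤ (D + 1) ^ (n + 1) := by
          have : #(G.neighborFinset v) ≤ D := hD v
          rw [pow_succ]; nlinarith [Nat.one_le_pow n (D + 1) (Nat.succ_pos D)]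

end walkBall

theorem Connected.exists_finset_card_eq_dist_le [Infinite V] [G.LocallyFinite]
    (hG : G.Connected) (v : V) (n : ℕ) :
    ∃ s : Finset V, #s = n + 1 ∧ ∀ x ∈ s, G.dist v x ≤ n := by
  classical
  obtain ⟨y, hy⟩ := Infinite.exists_notMem_finset (G.walkBall v n)
  have hny : n ≤ G.dist v y := by
    by_contra! h
    exact hy (hG.mem_walkBall_of_dist_le h.le)
  choose g hg using fun k : Fin (n + 1) => hG.exists_dist_eq_of_le (k.is_le.trans hny)
  have hinj : Function.Injective g := fun i j hij => Fin.ext (by rw [← hg i, ← hg j, hij])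
  refine ⟨univ.map ⟨g, hinj⟩, by simp, ?_⟩
  simp only [mem_map, mem_univ, true_and, Function.Embedding.coeFn_mk]
  rintro _ ⟨k, rfl⟩
  exact (hg k).le.trans k.is_le

theorem exists_forall_mem_and_ne_of_adj (G : SimpleGraph V) [G.LocallyFinite] {D : ℕ}
    (hD : ∀ v, G.degree v ≤ D) (L : V → Finset W) (hL : ∀ v, D < #(L v)) :
    ∃ f : V → W, (∀ v, f v ∈ L v) ∧ ∀ ⦃u v⦄, G.Adj u v → f u ≠ f v := by
  classical
  let r : V → V → Prop := WellOrderingRel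
  have hfree : ∀ v (t : Finset W), #t ≤ D → ∃ w ∈ L v, w ∉ t := fun v t ht =>
    exists_mem_notMem_of_card_lt_card (ht.trans_lt (hL v))
  -- greedy choice along a well-order: avoid the values already given to earlier neighbours
  let used (v : V) (g : ∀ u, r u v → W) : Finset W :=
    ((G.neighborFinset v).filter (r · v)).attach.image fun u =>
      g u.1 ((mem_filter (p := (r · v))).1 u.2).2
  have hused : ∀ v g, #(used v g) ≤ D := fun v g =>
    card_image_le.trans <| card_attach.trans_le <| (card_filter_le _ _).trans (hD v)
  let f : V → W := WellOrderingRel.isWellOrder.wf.fix fun v g => (hfree v _ (hused v g)).choose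
  have hf : ∀ v, f v ∈ L v ∧ f v ∉ used v fun u _ => f u := fun v => by
    have hfix : f v = (hfree v _ (hused v fun u _ => f u)).choose := WellFounded.fix_eq _ _ v
    rw [hfix]
    exact (hfree v _ (hused v fun u _ => f u)).choose_spec
  have hlt : ∀ ⦃u v⦄, G.Adj u v → r u v → f u ≠ f v := fun u v huv hr he =>
    (hf v).2 <| mem_image.2
      ⟨⟨u, mem_filter.2 ⟨(mem_neighborFinset _ _ _).2 huv.symm, hr⟩⟩, mem_attach _ _, he⟩
  refine ⟨f, fun v => (hf v).1, fun u v huv => ?_⟩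
  rcases trichotomous_of r u v with h | rfl | h
  · exact hlt huv h
  · exact (huv.ne rfl).elim
  · exact (hlt huv.symm h).symm

theorem exists_walks_reverse_eq {G : SimpleGraph V} {H : SimpleGraph W} (f : V → W)
    (P : ∀ {u v : W}, H.Walk u v → Prop) (hP : ∀ {u v : W} (p : H.Walk u v), P p → P p.reverse)
    (h : ∀ ⦃x y⦄, G.Adj x y → ∃ p : H.Walk (f x) (f y), P p) :
    ∃ Φ : ∀ ⦃x y⦄, G.Adj x y → H.Walk (f x) (f y),
      (∀ ⦃x y⦄ (hxy : G.Adj x y), P (Φ hxy)) ∧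
      ∀ ⦃x y⦄ (hxy : G.Adj x y), Φ hxy.symm = (Φ hxy).reverse := by
  classical
  choose p hp using h
  let r : V → V → Prop := WellOrderingRel
  let Φ : ∀ ⦃x y⦄, G.Adj x y → H.Walk (f x) (f y) := fun x y hxy =>
    if r x y then p hxy else (p hxy.symm).reverse
  refine ⟨Φ, fun x y hxy => ?_, fun x y hxy => ?_⟩
  · by_cases hr : r x y
    · simpa [Φ, hr] using hp hxy
    · simpa [Φ, hr] using hP _ (hp hxy.symm)
  · rcases trichotomous_of r x y with h | rfl | h
    · simp [Φ, h, asymm h]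
    · exact (hxy.ne rfl).elim
    · simp [Φ, h, asymm h]

theorem exists_dist_le_and_ne_of_adj [Infinite W] {G : SimpleGraph V} {H : SimpleGraph W}
    [G.LocallyFinite] [H.LocallyFinite] (hH : H.Connected) {D : ℕ} (hD : ∀ v, G.degree v ≤ D)
    (φ : V → W) :
    ∃ f : V → W, (∀ x, H.dist (φ x) (f x) ≤ D) ∧ ∀ ⦃x y⦄, G.Adj x y → f x ≠ f y := by
  choose L hL hLdist using fun x => hH.exists_finset_card_eq_dist_le (φ x) D
  obtain ⟨f, hfL, hf⟩ := G.exists_forall_mem_and_ne_of_adj hD L fun x => (hL x) ▸ D.lt_succ_self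
  exact ⟨f, fun x => hLdist x _ (hfL x), hf⟩

end SimpleGraph

namespace IsRoughIsometry

variable {V W : Type*} {G : SimpleGraph V} {H : SimpleGraph W} {φ : V → W}

theorem exists_dist_le_of_adj (hφ : IsRoughIsometry G H φ) :
    ∃ K : ℕ, ∀ ⦃x y⦄, G.Adj x y → H.dist (φ x) (φ y) ≤ K := by
  obtain ⟨α, -, β, -, hdist, -⟩ := hφ
  refine ⟨⌈α + β⌉₊, fun x y hxy => ?_⟩
  have h := (hdist x y).2
  rw [SimpleGraph.dist_eq_one_iff_adj.2 hxy, Nat.cast_one, mul_one] at h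
  exact_mod_cast h.trans (Nat.le_ceil _)

theorem exists_dist_le_of_dist_le (hφ : IsRoughIsometry G H φ) (r : ℕ) :
    ∃ N : ℕ, ∀ x y, H.dist (φ x) (φ y) ≤ r → G.dist x y ≤ N := by
  obtain ⟨α, hα, β, -, hdist, -⟩ := hφ
  refine ⟨⌈α * (r + β)⌉₊, fun x y hr => ?_⟩
  have h : α⁻¹ * G.dist x y ≤ r + β := by
    have : (H.dist (φ x) (φ y) : ℝ) ≤ r := by exact_mod_cast hr
    linarith [(hdist x y).1]
  exact_mod_cast ((inv_mul_le_iff₀ hα).1 h).trans (Nat.le_ceil _)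

theorem exists_inverse (hφ : IsRoughIsometry G H φ) (hH : H.Connected) :
    ∃ ψ : W → V, IsRoughIsometry H G ψ := by
  obtain ⟨α, hα, β, hβ, hdist, hcobdd⟩ := hφ
  choose ψ hψ using hcobdd
  have hψ' : ∀ w, (H.dist (φ (ψ w)) w : ℝ) ≤ β := fun w => H.dist_comm (u := w) ▸ hψ w
  have hclose : ∀ w w', |(H.dist (φ (ψ w)) (φ (ψ w')) : ℝ) - H.dist w w'| ≤ 2 * β := by
    intro w w'
    have h₁ : (H.dist (φ (ψ w)) (φ (ψ w')) : ℝ) ≤ H.dist (φ (ψ w)) w + H.dist w w' +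
        H.dist w' (φ (ψ w')) := by exact_mod_cast hH.dist_le_add_add _ _ _ _
    have h₂ : (H.dist w w' : ℝ) ≤ H.dist w (φ (ψ w)) + H.dist (φ (ψ w)) (φ (ψ w')) +
        H.dist (φ (ψ w')) w' := by exact_mod_cast hH.dist_le_add_add _ _ _ _
    rw [abs_le]
    constructor <;> linarith [hψ w, hψ w', hψ' w, hψ' w']
  have hαβ : 0 ≤ α * β := by positivity
  have hα'β : 0 ≤ α⁻¹ * β := by positivity
  refine ⟨ψ, α, hα, 3 * (α * β + α⁻¹ * β), by positivity, fun w w' => ⟨?_, ?_⟩,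
    fun v => ⟨φ v, ?_⟩⟩
  · have h : (H.dist w w' : ℝ) ≤ α * (G.dist (ψ w) (ψ w') + 3 * (α⁻¹ * β)) := by
      rw [mul_add, mul_left_comm, mul_inv_cancel_left₀ hα.ne']
      linarith [(hdist (ψ w) (ψ w')).2, (abs_le.1 (hclose w w')).1]
    linarith [(inv_mul_le_iff₀ hα).2 h]
  · have h : α⁻¹ * G.dist (ψ w) (ψ w') ≤ H.dist w w' + 3 * β := by
      linarith [(hdist (ψ w) (ψ w')).1, (abs_le.1 (hclose w w')).2]
    linarith [(inv_mul_le_iff₀ hα).1 h]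
  · have h : α⁻¹ * G.dist v (ψ (φ v)) ≤ 2 * β := by
      linarith [(hdist v (ψ (φ v))).1, hψ (φ v)]
    linarith [(inv_mul_le_iff₀ hα).1 h]

end IsRoughIsometry

section RoughEmbedding

open SimpleGraph Finset

variable {V W : Type*}

theorem pathResistance_le_length_mul {H : SimpleGraph W} {r : W → W → ℝ≥0∞} {R : ℝ≥0∞}
    (hr : ∀ a b, H.Adj a b → r a b ≤ R) {u v : W} (p : H.Walk u v) :
    pathResistance r p ≤ p.length * R := by
  have h := List.sum_le_card_nsmul (p.darts.map fun d => r d.toProd.1 d.toProd.2) R <| by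
    simpa using fun d _ => hr _ _ d.adj
  simpa [pathResistance] using h

theorem exists_finset_card_le_setOf_mem_edges_subset {G : SimpleGraph V}
    {H : SimpleGraph W} [G.LocallyFinite] (hG : G.Connected) (hH : H.Connected) {D : ℕ}
    (hD : ∀ v, G.degree v ≤ D) {f : V → W} {Φ : ∀ ⦃x y⦄, G.Adj x y → H.Walk (f x) (f y)}
    {L N : ℕ} (hΦ : ∀ ⦃x y⦄ (h : G.Adj x y), (Φ h).length ≤ L)
    (hN : ∀ x y, H.dist (f x) (f y) ≤ 2 * L → G.dist x y ≤ N) (e : Sym2 W) :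
    ∃ T : Finset (V × V), #T ≤ (D + 1) ^ N * D ∧
      {pr : V × V | ∃ h : G.Adj pr.1 pr.2, e ∈ (Φ h).edges} ⊆ T := by
  classical
  induction e using Sym2.ind with | _ w w' =>
  set S := {pr : V × V | ∃ h : G.Adj pr.1 pr.2, s(w, w') ∈ (Φ h).edges}
  rcases S.eq_empty_or_nonempty with hS | ⟨⟨x₀, y₀⟩, hx₀⟩
  · exact ⟨∅, by simp, by simp [hS]⟩
  -- every path through `s(w, w')` starts `L`-close to `w`, hence its source is `N`-close to `x₀`
  have hnear : ∀ pr ∈ S, H.dist (f pr.1) w ≤ L := by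
    rintro ⟨x, y⟩ ⟨h, he⟩
    exact ((Φ h).dist_le_length_of_mem_support
      ((Φ h).fst_mem_support_of_mem_edges he)).trans (hΦ h)
  refine ⟨(G.walkBall x₀ N).biUnion fun x => {x} ×ˢ G.neighborFinset x, ?_, ?_⟩
  · refine (card_biUnion_le_card_mul _ _ D fun x _ => ?_).trans
      (Nat.mul_le_mul_right _ (card_walkBall_le hD x₀ N))
    simpa using hD x
  · rintro ⟨x, y⟩ hxy
    have hdist : H.dist (f x₀) (f x) ≤ 2 * L := by
      have h₀ : H.dist (f x₀) w ≤ L := hnear _ hx₀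
      have h : H.dist w (f x) ≤ L := H.dist_comm (u := f x) ▸ hnear _ hxy
      have := hH.dist_triangle (u := f x₀) (v := w) (w := f x)
      omega
    obtain ⟨hadj, -⟩ := hxy
    rw [mem_coe, mem_biUnion]
    exact ⟨x, hG.mem_walkBall_of_dist_le (hN _ _ hdist), by simpa using hadj⟩

theorem exists_isRoughEmbedding_of_ne_of_dist_le {G₁ : SimpleGraph V} {G₂ : SimpleGraph W}
    [G₁.LocallyFinite] (h₁ : G₁.Connected) (h₂ : G₂.Connected) {D : ℕ}
    (hD : ∀ v, G₁.degree v ≤ D) {c₁ : V → V → ℝ≥0∞} {c₂ : W → W → ℝ≥0∞} {M m : ℝ≥0∞}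
    (hM : M ≠ ∞) (hm : 0 < m) (hc₁ : ∀ x y, G₁.Adj x y → 0 < c₁ x y ∧ c₁ x y ≤ M)
    (hc₂ : ∀ x y, G₂.Adj x y → m ≤ c₂ x y) {f : V → W} {K : ℕ}
    (hf : ∀ ⦃x y⦄, G₁.Adj x y → f x ≠ f y)
    (hfK : ∀ ⦃x y⦄, G₁.Adj x y → G₂.dist (f x) (f y) ≤ K)
    (hfN : ∀ r, ∃ N, ∀ x y, G₂.dist (f x) (f y) ≤ r → G₁.dist x y ≤ N) :
    ∃ Φ : ∀ ⦃x y⦄, G₁.Adj x y → G₂.Walk (f x) (f y),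
      IsRoughEmbedding G₁ G₂ (fun x y => (c₁ x y)⁻¹) (fun x y => (c₂ x y)⁻¹) f Φ := by
  obtain ⟨Φ, hΦ, hΦsymm⟩ := exists_walks_reverse_eq f
    (fun p => p.IsPath ∧ 0 < p.length ∧ p.length ≤ K)
    (fun p hp => ⟨hp.1.reverse, by simpa using hp.2⟩) fun x y hxy => by
      obtain ⟨p, hp, hlen⟩ := h₂.exists_path_of_dist (f x) (f y)
      exact ⟨p, hp, hlen ▸ h₂.pos_dist_of_ne (hf hxy), hlen ▸ hfK hxy⟩
  obtain ⟨N, hN⟩ := hfN (2 * K)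
  refine ⟨Φ, fun x y h => ⟨(hΦ h).1, (hΦ h).2.1⟩, hΦsymm, ⟨K * m⁻¹ * M, by finiteness,
    fun x y h => ?_⟩, ⟨(D + 1) ^ N * D, fun e => ?_⟩⟩
  · have hM_div : 1 ≤ M * (c₁ x y)⁻¹ := by
      rw [← div_eq_mul_inv, ENNReal.le_div_iff_mul_le (Or.inl (hc₁ x y h).1.ne') (Or.inr hM),
        one_mul]
      exact (hc₁ x y h).2
    calc pathResistance _ (Φ h)
        ≤ (Φ h).length * m⁻¹ :=
          pathResistance_le_length_mul (fun a b hab => ENNReal.inv_le_inv.2 (hc₂ a b hab)) _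
      _ ≤ K * m⁻¹ := by gcongr; exact (hΦ h).2.2
      _ ≤ K * m⁻¹ * (M * (c₁ x y)⁻¹) := le_mul_of_one_le_right zero_le hM_div
      _ = K * m⁻¹ * M * (c₁ x y)⁻¹ := (mul_assoc _ _ _).symm
  · obtain ⟨T, hT, hsub⟩ := exists_finset_card_le_setOf_mem_edges_subset h₁ h₂ hD
      (fun x y h => (hΦ h).2.2) hN e
    exact ⟨T.finite_toSet.subset hsub,
      (Set.ncard_le_ncard hsub T.finite_toSet).trans (by rwa [Set.ncard_coe_finset])⟩

theorem IsRoughIsometry.exists_isRoughEmbedding [Infinite W] {G₁ : SimpleGraph V}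
    {G₂ : SimpleGraph W} [G₁.LocallyFinite] [G₂.LocallyFinite] (h₁ : G₁.Connected)
    (h₂ : G₂.Connected) {D : ℕ} (hD : ∀ v, G₁.degree v ≤ D) {c₁ : V → V → ℝ≥0∞}
    {c₂ : W → W → ℝ≥0∞} {M m : ℝ≥0∞} (hM : M ≠ ∞) (hm : 0 < m)
    (hc₁ : ∀ x y, G₁.Adj x y → 0 < c₁ x y ∧ c₁ x y ≤ M) (hc₂ : ∀ x y, G₂.Adj x y → m ≤ c₂ x y)
    {φ : V → W} (hφ : IsRoughIsometry G₁ G₂ φ) :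
    ∃ (f : V → W) (Φ : ∀ ⦃x y⦄, G₁.Adj x y → G₂.Walk (f x) (f y)),
      IsRoughEmbedding G₁ G₂ (fun x y => (c₁ x y)⁻¹) (fun x y => (c₂ x y)⁻¹) f Φ := by
  obtain ⟨f, hφf, hf⟩ := exists_dist_le_and_ne_of_adj h₂ hD φ
  have hfφ : ∀ x, G₂.dist (f x) (φ x) ≤ D := fun x => G₂.dist_comm (u := φ x) ▸ hφf x
  obtain ⟨K, hK⟩ := hφ.exists_dist_le_of_adj
  refine ⟨f, exists_isRoughEmbedding_of_ne_of_dist_le h₁ h₂ hD hM hm hc₁ hc₂ hf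
    (K := D + K + D) (fun x y hxy => ?_) fun r => ?_⟩
  · have := h₂.dist_le_add_add (f x) (φ x) (φ y) (f y)
    have := hK hxy
    have := hfφ x
    have := hφf y
    omega
  · obtain ⟨N, hN⟩ := hφ.exists_dist_le_of_dist_le (D + r + D)
    refine ⟨N, fun x y hr => hN x y ?_⟩
    have := h₂.dist_le_add_add (φ x) (f x) (f y) (φ y)
    have := hφf x
    have := hfφ y
    omega

end RoughEmbedding

theorem roughly_isometric_networks_roughly_equivalent_general
    {V W : Type*} [Infinite V] [Infinite W]
    (G₁ : SimpleGraph V) (G₂ : SimpleGraph W)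
    (h₁ : G₁.Connected) (h₂ : G₂.Connected)
    [G₁.LocallyFinite] [G₂.LocallyFinite]
    -- bounded degrees
    (hdeg₁ : ∃ D : ℕ, ∀ v, G₁.degree v ≤ D) (hdeg₂ : ∃ D : ℕ, ∀ w, G₂.degree w ≤ D)
    (c₁ : V → V → ℝ≥0∞) (c₂ : W → W → ℝ≥0∞)
    -- c₁, c₂, c₁⁻¹, c₂⁻¹ are all bounded (on edges)
    (hbd₁ : ∃ m M : ℝ≥0∞, 0 < m ∧ M ≠ ∞ ∧ ∀ x y, G₁.Adj x y → m ≤ c₁ x y ∧ c₁ x y ≤ M)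
    (hbd₂ : ∃ m M : ℝ≥0∞, 0 < m ∧ M ≠ ∞ ∧ ∀ x y, G₂.Adj x y → m ≤ c₂ x y ∧ c₂ x y ≤ M)
    -- the two networks are roughly isometric
    (hri : ∃ φ : V → W, IsRoughIsometry G₁ G₂ φ) :
    -- rough embeddings exist in both directions (rough equivalence)
    (∃ (φ : V → W) (Φ : ∀ ⦃x y : V⦄, G₁.Adj x y → G₂.Walk (φ x) (φ y)),
      IsRoughEmbedding G₁ G₂ (fun x y => (c₁ x y)⁻¹) (fun x y => (c₂ x y)⁻¹) φ Φ) ∧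
    (∃ (ψ : W → V) (Ψ : ∀ ⦃x y : W⦄, G₂.Adj x y → G₁.Walk (ψ x) (ψ y)),
      IsRoughEmbedding G₂ G₁ (fun x y => (c₂ x y)⁻¹) (fun x y => (c₁ x y)⁻¹) ψ Ψ) := by
  obtain ⟨φ, hφ⟩ := hri
  obtain ⟨ψ, hψ⟩ := hφ.exists_inverse h₂
  obtain ⟨D₁, hD₁⟩ := hdeg₁
  obtain ⟨D₂, hD₂⟩ := hdeg₂
  obtain ⟨m₁, M₁, hm₁, hM₁, hc₁⟩ := hbd₁
  obtain ⟨m₂, M₂, hm₂, hM₂, hc₂⟩ := hbd₂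
  exact ⟨hφ.exists_isRoughEmbedding h₁ h₂ hD₁ hM₁ hm₂
      (fun x y h => ⟨hm₁.trans_le (hc₁ x y h).1, (hc₁ x y h).2⟩) fun x y h => (hc₂ x y h).1,
    hψ.exists_isRoughEmbedding h₂ h₁ hD₂ hM₂ hm₁
      (fun x y h => ⟨hm₂.trans_le (hc₂ x y h).1, (hc₂ x y h).2⟩) fun x y h => (hc₁ x y h).1⟩

theorem roughly_isometric_networks_roughly_equivalent
    {V W : Type*} [Infinite V] [Infinite W]
    (G₁ : SimpleGraph V) (G₂ : SimpleGraph W)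
    (h₁ : G₁.Connected) (h₂ : G₂.Connected)
    [G₁.LocallyFinite] [G₂.LocallyFinite]
    -- bounded degrees
    (hdeg₁ : ∃ D : ℕ, ∀ v, G₁.degree v ≤ D) (hdeg₂ : ∃ D : ℕ, ∀ w, G₂.degree w ≤ D)
    (c₁ : V → V → ℝ≥0∞) (c₂ : W → W → ℝ≥0∞)
    (hc₁sym : ∀ x y, c₁ x y = c₁ y x) (hc₂sym : ∀ x y, c₂ x y = c₂ y x)
    (hc₁adj : ∀ x y, 0 < c₁ x y ↔ G₁.Adj x y)
    (hc₂adj : ∀ x y, 0 < c₂ x y ↔ G₂.Adj x y)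
    -- c₁, c₂, c₁⁻¹, c₂⁻¹ are all bounded (on edges)
    (hbd₁ : ∃ m M : ℝ≥0∞, 0 < m ∧ M ≠ ∞ ∧ ∀ x y, G₁.Adj x y → m ≤ c₁ x y ∧ c₁ x y ≤ M)
    (hbd₂ : ∃ m M : ℝ≥0∞, 0 < m ∧ M ≠ ∞ ∧ ∀ x y, G₂.Adj x y → m ≤ c₂ x y ∧ c₂ x y ≤ M)
    -- the two networks are roughly isometric
    (hri : ∃ φ : V → W, IsRoughIsometry G₁ G₂ φ) :
    -- rough embeddings exist in both directions (rough equivalence)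
    (∃ (φ : V → W) (Φ : ∀ ⦃x y : V⦄, G₁.Adj x y → G₂.Walk (φ x) (φ y)),
      IsRoughEmbedding G₁ G₂ (fun x y => (c₁ x y)⁻¹) (fun x y => (c₂ x y)⁻¹) φ Φ) ∧
    (∃ (ψ : W → V) (Ψ : ∀ ⦃x y : W⦄, G₂.Adj x y → G₁.Walk (ψ x) (ψ y)),
      IsRoughEmbedding G₂ G₁ (fun x y => (c₂ x y)⁻¹) (fun x y => (c₁ x y)⁻¹) ψ Ψ) :=
  roughly_isometric_networks_roughly_equivalent_general G₁ G₂ h₁ h₂ hdeg₁ hdeg₂ c₁ c₂ hbd₁ hbd₂ hri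
end

section
/- Consider the nearest-neighbour chain on ℕ with rates q(x,x+1)=(2x+1)/(4x) and q(x,x-1)=(2x-1)/(4x) for x≥1, and its 2-leg spider with span s=2 where the first leg is always the left leg, so that L(x)={(x,x+1),(x,x+2)}. Identifying the configuration (x,x+i) with the integer 2x+i−1, the jump chain of the spider walk is a nearest-neighbour chain on the integers whose mean drift satisfies μ^s(2x)=(2x+1)/(4x(x+1)−1) and μ^s(2x+1)=(x+1)/(2x(x+2)+1) for x≥1; in particular μ^s(n)∼1/n as n→∞ and the spider walk is transient. -/
open scoped ENNReal

/- STATEMENT 9: For the nearest-neighbour chain on ℕ with rates q(x,x+1)=(2x+1)/(4x),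
q(x,x-1)=(2x-1)/(4x) for x ≥ 1, the 2-leg spider with span s=2 (ordered legs,
L(x)={(x,x+1),(x,x+2)}), identified with a chain on ℕ via (x,x+i) ↔ 2x+i-1, has a
nearest-neighbour jump chain whose mean drift satisfies
μ^s(2x)=(2x+1)/(4x(x+1)-1) and μ^s(2x+1)=(x+1)/(2x(x+2)+1) for x ≥ 1; in particular
μ^s(n) ∼ 1/n and the spider walk is transient. -/

/-- Configurations of the 2-leg spider with span 2 and ordered legs on ℕ. -/
def SpCfg : Type := {c : ℕ × ℕ // c.2 = c.1 + 1 ∨ c.2 = c.1 + 2}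

open Classical in
/-- Spider rates: exactly one leg moves, with the rate of the underlying walk;
moves violating the constraints (encoded in `SpCfg`) are suppressed. -/
noncomputable def spRate (q : ℕ → ℕ → ℝ≥0∞) (c d : SpCfg) : ℝ≥0∞ :=
  (if c.1.2 = d.1.2 ∧ c.1.1 ≠ d.1.1 then q c.1.1 d.1.1 else 0) +
  (if c.1.1 = d.1.1 ∧ c.1.2 ≠ d.1.2 then q c.1.2 d.1.2 else 0)

/-- Jump chain of a continuous-time chain with rates `q`. -/
noncomputable def jumpChain {S : Type*} (q : S → S → ℝ≥0∞) : S → S → ℝ≥0∞ :=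
  fun x y => q x y / ∑' z, q x z

/-- The identification (x, x+i) ↔ 2x+i-1 of spider configurations with ℕ. -/
def enc (c : SpCfg) : ℕ := 2 * c.1.1 + (c.1.2 - c.1.1) - 1

open Classical in
/-- The configuration encoded by n ∈ ℕ. -/
def cfgOf (n : ℕ) : SpCfg :=
  if n % 2 = 0 then ⟨(n / 2, n / 2 + 1), Or.inl rfl⟩ else ⟨(n / 2, n / 2 + 2), Or.inr rfl⟩

/-- Mean drift of the (encoded) jump chain of the spider. -/
noncomputable def spDrift (q : ℕ → ℕ → ℝ≥0∞) (c : SpCfg) : ℝ :=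
  ∑' d : SpCfg, (jumpChain (spRate q) c d).toReal * ((enc d : ℝ) - (enc c : ℝ))

open Classical in
/-- n-step transition probabilities. -/
noncomputable def iterK {S : Type*} (p : S → S → ℝ≥0∞) : ℕ → S → S → ℝ≥0∞
  | 0 => fun x y => if x = y then (1 : ℝ≥0∞) else 0
  | (n+1) => fun x y => ∑' z, iterK p n x z * p z y

/-!
In the encoding `(x, x + i) ↦ 2x + i - 1` every move of a single leg changes the code by `±1`,
so the jump chain of the spider is a nearest-neighbour chain on `ℕ`. For `n ≥ 2` its up and down
rates stand in the ratio `n (n + 3) : (n - 1) (n + 2)`; this gives the drift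
`(n + 1) / (n ^ 2 + 2 n - 1)` and makes `1/n + 1/(n+1) + 1/(n+2)` harmonic there. Raised a little
at `0`, that function is a finite, strictly decreasing superharmonic function of the chain. Cut off
below level `m` it stays superharmonic and becomes strictly superharmonic at `m`, so each visit to
`m` costs a fixed amount of potential, which bounds the Green function at `m`.
-/

section MarkovChain

variable {S : Type*}

lemma jumpChain_comp_equiv {T : Type*} (e : S ≃ T) (r : T → T → ℝ≥0∞) (x y : S) :
    jumpChain (fun a b => r (e a) (e b)) x y = jumpChain r (e x) (e y) := by
  simp only [jumpChain, e.tsum_eq (r (e x))]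

lemma iterK_comp_equiv {T : Type*} (e : S ≃ T) (p : T → T → ℝ≥0∞) (n : ℕ) (x y : S) :
    iterK (fun a b => p (e a) (e b)) n x y = iterK p n (e x) (e y) := by
  induction n generalizing y with
  | zero => simp only [iterK]; congr 1; exact propext e.injective.eq_iff.symm
  | succ n ih => simp only [iterK, ih, e.tsum_eq (fun t => iterK p n (e x) t * p t (e y))]

lemma tsum_jumpChain_mul (r : S → S → ℝ≥0∞) (x : S) (F : S → ℝ≥0∞) :
    ∑' y, jumpChain r x y * F y = (∑' y, r x y * F y) / ∑' y, r x y := by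
  simp only [jumpChain, div_eq_mul_inv, ← ENNReal.tsum_mul_right]
  exact tsum_congr fun y => by ring

lemma tsum_jumpChain_le_one (r : S → S → ℝ≥0∞) (x : S) : ∑' y, jumpChain r x y ≤ 1 := by
  simpa using (tsum_jumpChain_mul r x 1).trans_le (by simp [ENNReal.div_self_le_one])

lemma tsum_iterK_succ_mul (p : S → S → ℝ≥0∞) (n : ℕ) (c : S) (h : S → ℝ≥0∞) :
    ∑' z, iterK p (n + 1) c z * h z = ∑' z, iterK p n c z * ∑' y, p z y * h y := by
  simp only [iterK, ← ENNReal.tsum_mul_right, ← ENNReal.tsum_mul_left, mul_assoc]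
  exact ENNReal.tsum_comm

open Classical in
/-- The potential `∑' z, iterK p n c z * h z` of a superharmonic `h` drops by at least
`iterK p n c c * (h c - ∑' y, p c y * h y)` at each step; summing gives the bound. -/
lemma tsum_iterK_mul_le_of_superharmonic (p : S → S → ℝ≥0∞) (h : S → ℝ≥0∞)
    (hh : ∀ z, ∑' y, p z y * h y ≤ h z) (c : S) :
    (∑' n, iterK p n c c) * (h c - ∑' y, p c y * h y) ≤ h c := by
  set ε := h c - ∑' y, p c y * h y
  set a : ℕ → ℝ≥0∞ := fun n => ∑' z, iterK p n c z * h z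
  have hstrict : ∀ z, ∑' y, p z y * h y + (if z = c then ε else 0) ≤ h z := by
    intro z
    split_ifs with hz
    · subst hz; exact (add_tsub_cancel_of_le (hh z)).le
    · simpa using hh z
  have hstep : ∀ n, a (n + 1) + iterK p n c c * ε ≤ a n := fun n =>
    calc a (n + 1) + iterK p n c c * ε
        = ∑' z, iterK p n c z * (∑' y, p z y * h y + if z = c then ε else 0) := by
          simp only [a, tsum_iterK_succ_mul, mul_add, mul_ite, mul_zero,
            ENNReal.tsum_add, tsum_ite_eq]
      _ ≤ a n := ENNReal.tsum_le_tsum fun z => mul_le_mul_right (hstrict z) _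
  have ha0 : a 0 = h c := by simp [a, iterK]
  have htel : ∀ N, (∑ n ∈ Finset.range N, iterK p n c c * ε) + a N ≤ h c := by
    intro N
    induction N with
    | zero => simp [ha0]
    | succ N ih =>
      calc (∑ n ∈ Finset.range (N + 1), iterK p n c c * ε) + a (N + 1)
          = (∑ n ∈ Finset.range N, iterK p n c c * ε) + (a (N + 1) + iterK p N c c * ε) := by
            rw [Finset.sum_range_succ]; ring
        _ ≤ h c := (add_le_add_right (hstep N) _).trans ih
  rw [← ENNReal.tsum_mul_right]
  exact ENNReal.tsum_le_of_sum_range_le fun N => le_trans le_self_add (htel N)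

lemma tsum_iterK_ne_top_of_superharmonic (p : S → S → ℝ≥0∞) (h : S → ℝ≥0∞)
    (hh : ∀ z, ∑' y, p z y * h y ≤ h z) {c : S} (hc : h c ≠ ⊤)
    (hlt : ∑' y, p c y * h y < h c) :
    ∑' n, iterK p n c c ≠ ⊤ := by
  intro htop
  have := tsum_iterK_mul_le_of_superharmonic p h hh c
  rw [htop, ENNReal.top_mul (tsub_pos_of_lt hlt).ne'] at this
  exact hc (top_le_iff.mp this)

end MarkovChain

lemma tsum_mul_comp_max_le {p : ℕ → ℕ → ℝ≥0∞} (hp : ∀ n, ∑' k, p n k ≤ 1) {H : ℕ → ℝ≥0∞}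
    (hH : Antitone H) {m : ℕ} (hsup : ∀ n, m ≤ n → ∑' k, p n k * H k ≤ H n) (n : ℕ) :
    ∑' k, p n k * H (max k m) ≤ H (max n m) := by
  rcases le_total m n with hmn | hnm
  · rw [max_eq_left hmn]
    exact (ENNReal.tsum_le_tsum fun k => mul_le_mul_right (hH (le_max_left k m)) _).trans
      (hsup n hmn)
  · rw [max_eq_right hnm]
    calc ∑' k, p n k * H (max k m) ≤ ∑' k, p n k * H m :=
          ENNReal.tsum_le_tsum fun k => mul_le_mul_right (hH (le_max_right k m)) _
      _ = (∑' k, p n k) * H m := ENNReal.tsum_mul_right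
      _ ≤ H m := mul_le_of_le_one_left' (hp n)

section NearestNeighbour

/-- `v 0` plays no role. -/
def nnRate (u v : ℕ → ℝ≥0∞) (n k : ℕ) : ℝ≥0∞ :=
  if k = n + 1 then u n else if k + 1 = n then v n else 0

variable (u v : ℕ → ℝ≥0∞)

lemma eq_add_one_or_add_one_eq_of_nnRate_ne_zero {n k : ℕ} (h : nnRate u v n k ≠ 0) :
    k = n + 1 ∨ k + 1 = n := by
  unfold nnRate at h
  split_ifs at h with h₁ h₂
  exacts [Or.inl h₁, Or.inr h₂, absurd rfl h]

lemma nnRate_of_ne {n k : ℕ} (h₁ : k ≠ n + 1) (h₂ : k + 1 ≠ n) : nnRate u v n k = 0 := by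
  simp [nnRate, h₁, h₂]

@[simp] lemma nnRate_self_add_one (n : ℕ) : nnRate u v n (n + 1) = u n := by simp [nnRate]

@[simp] lemma nnRate_add_one_self (n : ℕ) : nnRate u v (n + 1) n = v (n + 1) := by
  simp [nnRate, show n ≠ n + 1 + 1 by omega]

lemma tsum_nnRate_zero_mul (F : ℕ → ℝ≥0∞) : ∑' k, nnRate u v 0 k * F k = u 0 * F 1 := by
  rw [tsum_eq_single 1 fun k hk => by rw [nnRate_of_ne u v hk (by omega), zero_mul]]
  simp [nnRate]

lemma tsum_nnRate_succ_mul (n : ℕ) (F : ℕ → ℝ≥0∞) :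
    ∑' k, nnRate u v (n + 1) k * F k = u (n + 1) * F (n + 2) + v (n + 1) * F n := by
  rw [tsum_eq_sum (s := {n + 1 + 1, n}) fun k hk => ?_, Finset.sum_pair (by omega)]
  · simp only [nnRate_self_add_one, nnRate_add_one_self]
  · simp only [Finset.mem_insert, Finset.mem_singleton, not_or] at hk
    rw [nnRate_of_ne u v hk.1 (by omega), zero_mul]

lemma tsum_jumpChain_nnRate_zero_mul (hu₀ : u 0 ≠ 0) (hu : u 0 ≠ ⊤) (F : ℕ → ℝ≥0∞) :
    ∑' k, jumpChain (nnRate u v) 0 k * F k = F 1 := by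
  have hrow : ∑' k, nnRate u v 0 k = u 0 := by simpa using tsum_nnRate_zero_mul u v 1
  rw [tsum_jumpChain_mul, tsum_nnRate_zero_mul, hrow, mul_comm,
    ENNReal.mul_div_cancel_right hu₀ hu]

lemma tsum_nnRate_succ (n : ℕ) : ∑' k, nnRate u v (n + 1) k = u (n + 1) + v (n + 1) := by
  simpa using tsum_nnRate_succ_mul u v n 1

lemma tsum_jumpChain_nnRate_succ_mul (n : ℕ) (F : ℕ → ℝ≥0∞) :
    ∑' k, jumpChain (nnRate u v) (n + 1) k * F k
      = (u (n + 1) * F (n + 2) + v (n + 1) * F n) / (u (n + 1) + v (n + 1)) := by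
  rw [tsum_jumpChain_mul, tsum_nnRate_succ_mul, tsum_nnRate_succ]

lemma tsum_toReal_jumpChain_nnRate_succ_mul (n : ℕ) (hu : u (n + 1) ≠ ⊤) (hv : v (n + 1) ≠ ⊤)
    (f : ℕ → ℝ) :
    ∑' k, (jumpChain (nnRate u v) (n + 1) k).toReal * f k
      = ((u (n + 1)).toReal * f (n + 2) + (v (n + 1)).toReal * f n)
        / ((u (n + 1)).toReal + (v (n + 1)).toReal) := by
  simp only [jumpChain, tsum_nnRate_succ, ENNReal.toReal_div, ENNReal.toReal_add hu hv]
  rw [tsum_eq_sum (s := {n + 1 + 1, n}) fun k hk => ?_, Finset.sum_pair (by omega)]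
  · simp only [nnRate_self_add_one, nnRate_add_one_self]
    ring
  · simp only [Finset.mem_insert, Finset.mem_singleton, not_or] at hk
    simp [nnRate_of_ne u v hk.1 (by omega)]

/-- When `u (n + 1) = ⊤` the row of the jump chain vanishes (`⊤ / ⊤ = 0`). -/
lemma tsum_jumpChain_nnRate_succ_mul_ofReal_le (n : ℕ) (hv : v (n + 1) ≠ ⊤) {f : ℕ → ℝ}
    (hf : ∀ k, 0 ≤ f k)
    (h : u (n + 1) ≠ ⊤ → (u (n + 1)).toReal * f (n + 2) + (v (n + 1)).toReal * f n
      ≤ ((u (n + 1)).toReal + (v (n + 1)).toReal) * f (n + 1)) :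
    ∑' k, jumpChain (nnRate u v) (n + 1) k * ENNReal.ofReal (f k) ≤ ENNReal.ofReal (f (n + 1)) := by
  rw [tsum_jumpChain_nnRate_succ_mul]
  by_cases hu : u (n + 1) = ⊤
  · simp [hu]
  have hu' := ENNReal.ofReal_toReal hu
  have hv' := ENNReal.ofReal_toReal hv
  have hlhs : u (n + 1) * ENNReal.ofReal (f (n + 2)) + v (n + 1) * ENNReal.ofReal (f n)
      = ENNReal.ofReal ((u (n + 1)).toReal * f (n + 2) + (v (n + 1)).toReal * f n) := by
    rw [ENNReal.ofReal_add (by positivity [hf (n + 2)]) (by positivity [hf n]),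
      ENNReal.ofReal_mul ENNReal.toReal_nonneg, ENNReal.ofReal_mul ENNReal.toReal_nonneg, hu', hv']
  have hrhs : ENNReal.ofReal (f (n + 1)) * (u (n + 1) + v (n + 1))
      = ENNReal.ofReal (((u (n + 1)).toReal + (v (n + 1)).toReal) * f (n + 1)) := by
    rw [mul_comm, ENNReal.ofReal_mul (by positivity),
      ENNReal.ofReal_add ENNReal.toReal_nonneg ENNReal.toReal_nonneg, hu', hv']
  apply ENNReal.div_le_of_le_mul
  rw [hlhs, hrhs]
  exact ENNReal.ofReal_le_ofReal (h hu)

lemma tsum_jumpChain_nnRate_succ_mul_max_lt (n : ℕ) (hu : u (n + 1) ≠ 0) (hv : v (n + 1) ≠ ⊤)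
    {H : ℕ → ℝ≥0∞} (hH : H (n + 2) < H (n + 1)) (hH' : H (n + 1) ≠ ⊤) :
    ∑' k, jumpChain (nnRate u v) (n + 1) k * H (max k (n + 1)) < H (n + 1) := by
  rw [tsum_jumpChain_nnRate_succ_mul, max_eq_left (by omega), max_eq_right (by omega)]
  by_cases hut : u (n + 1) = ⊤
  · simpa [hut] using zero_le.trans_lt hH
  apply ENNReal.div_lt_of_lt_mul
  rw [mul_add, mul_comm (H (n + 1)), mul_comm (H (n + 1))]
  exact ENNReal.add_lt_add_right (ENNReal.mul_ne_top hv hH')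
    (ENNReal.mul_lt_mul_right hu hut hH)

end NearestNeighbour

section Spider

lemma SpCfg.eq_or_eq (c : SpCfg) :
    (∃ x, c = ⟨(x, x + 1), Or.inl rfl⟩) ∨ ∃ x, c = ⟨(x, x + 2), Or.inr rfl⟩ := by
  obtain ⟨⟨x, y⟩, h | h⟩ := c <;> simp only at h <;> subst h
  exacts [Or.inl ⟨x, rfl⟩, Or.inr ⟨x, rfl⟩]

@[simp] lemma enc_left (x : ℕ) : enc ⟨(x, x + 1), Or.inl rfl⟩ = 2 * x := by simp [enc]

@[simp] lemma enc_right (x : ℕ) : enc ⟨(x, x + 2), Or.inr rfl⟩ = 2 * x + 1 := by simp [enc]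

def encEquiv : SpCfg ≃ ℕ where
  toFun := enc
  invFun := cfgOf
  left_inv c := by
    rcases c.eq_or_eq with ⟨x, rfl⟩ | ⟨x, rfl⟩ <;> apply Subtype.ext <;> simp [cfgOf]; omega
  right_inv n := by
    by_cases h : n % 2 = 0 <;> simp [cfgOf, enc, h] <;> omega

lemma enc_cfgOf (n : ℕ) : enc (cfgOf n) = n := encEquiv.apply_symm_apply n

/-- From `(x, x + 1)` only the right leg can step up and only the left leg down; from
`(x, x + 2)` it is the other way round. -/
def spUp (q : ℕ → ℕ → ℝ≥0∞) (n : ℕ) : ℝ≥0∞ :=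
  if n % 2 = 0 then q (n / 2 + 1) (n / 2 + 2) else q (n / 2) (n / 2 + 1)

def spDown (q : ℕ → ℕ → ℝ≥0∞) (n : ℕ) : ℝ≥0∞ :=
  if n % 2 = 0 then q (n / 2) (n / 2 - 1) else q (n / 2 + 2) (n / 2 + 1)

/-- The jump chain of the spider, read through `enc`. -/
noncomputable def spChain (q : ℕ → ℕ → ℝ≥0∞) : ℕ → ℕ → ℝ≥0∞ :=
  jumpChain (nnRate (spUp q) (spDown q))

variable (q : ℕ → ℕ → ℝ≥0∞)

@[simp] lemma spUp_two_mul (x : ℕ) : spUp q (2 * x) = q (x + 1) (x + 2) := by simp [spUp]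

@[simp] lemma spUp_two_mul_add_one (x : ℕ) : spUp q (2 * x + 1) = q x (x + 1) := by
  simp [spUp, Nat.add_mod, Nat.add_div]

@[simp] lemma spDown_two_mul (x : ℕ) : spDown q (2 * x) = q x (x - 1) := by simp [spDown]

@[simp] lemma spDown_two_mul_add_one (x : ℕ) : spDown q (2 * x + 1) = q (x + 2) (x + 1) := by
  simp [spDown, Nat.add_mod, Nat.add_div]

lemma spRate_eq_nnRate (c d : SpCfg) :
    spRate q c d = nnRate (spUp q) (spDown q) (enc c) (enc d) := by
  rcases c.eq_or_eq with ⟨x, rfl⟩ | ⟨x, rfl⟩ <;> rcases d.eq_or_eq with ⟨y, rfl⟩ | ⟨y, rfl⟩ <;>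
    rcases (show x = y ∨ x = y + 1 ∨ y = x + 1 ∨ (x ≠ y ∧ x ≠ y + 1 ∧ y ≠ x + 1) by omega)
      with rfl | rfl | rfl | ⟨h₁, h₂, h₃⟩ <;>
    simp only [spRate, nnRate, enc_left, enc_right, spUp_two_mul, spUp_two_mul_add_one,
      spDown_two_mul, spDown_two_mul_add_one] <;>
    split_ifs <;> (try simp only [true_and] at *) <;> first | (exfalso; omega) | simp

lemma jumpChain_spRate (c d : SpCfg) : jumpChain (spRate q) c d = spChain q (enc c) (enc d) := by
  have : spRate q = fun c d => nnRate (spUp q) (spDown q) (encEquiv c) (encEquiv d) :=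
    funext₂ (spRate_eq_nnRate q)
  rw [this, jumpChain_comp_equiv]
  rfl

lemma iterK_jumpChain_spRate (n : ℕ) (c d : SpCfg) :
    iterK (jumpChain (spRate q)) n c d = iterK (spChain q) n (enc c) (enc d) := by
  rw [show jumpChain (spRate q) = fun c d => spChain q (encEquiv c) (encEquiv d) from
    funext₂ (jumpChain_spRate q), iterK_comp_equiv]
  rfl

lemma spDrift_eq_tsum_spChain (c : SpCfg) :
    spDrift q c = ∑' k, (spChain q (enc c) k).toReal * ((k : ℝ) - enc c) := by
  simp only [spDrift, jumpChain_spRate]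
  exact encEquiv.tsum_eq fun k => (spChain q (enc c) k).toReal * ((k : ℝ) - enc c)

end Spider

/-- Away from `0` the harmonic function of the spider chain; at `0` it exceeds
`lyap δ 1 = 1 + 1/2 + 1/3` by `δ`. -/
noncomputable def lyap (δ : ℝ) (n : ℕ) : ℝ :=
  if n = 0 then 1 + 1 / 2 + 1 / 3 + δ else 1 / n + 1 / (n + 1) + 1 / (n + 2)

lemma lyap_nonneg {δ : ℝ} (hδ : 0 ≤ δ) (n : ℕ) : 0 ≤ lyap δ n := by
  unfold lyap; split_ifs <;> positivity

lemma lyap_strictAnti {δ : ℝ} (hδ : 0 < δ) : StrictAnti (lyap δ) := by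
  refine strictAnti_nat_of_succ_lt fun n => ?_
  rcases n with _ | n
  · norm_num [lyap]
    linarith
  · simp only [lyap, Nat.succ_ne_zero, if_false]
    push_cast
    have h : 1 / ((n : ℝ) + 1 + 1 + 2) < 1 / ((n : ℝ) + 1) :=
      one_div_lt_one_div_of_lt (by positivity) (by linarith)
    rw [show (n : ℝ) + 1 + 1 + 1 = n + 1 + 2 by ring]
    linarith

lemma lyap_harmonic (δ : ℝ) {n : ℕ} (hn : 1 ≤ n) {a b : ℝ}
    (h : a * (n * (n + 3)) = b * ((n + 1) * (n + 4))) :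
    a * lyap δ (n + 2) + b * lyap δ n = (a + b) * lyap δ (n + 1) := by
  have hn' : (1 : ℝ) ≤ n := by exact_mod_cast hn
  have key : a * lyap δ (n + 2) + b * lyap δ n - (a + b) * lyap δ (n + 1)
      = 3 * (b * ((n + 1) * (n + 4)) - a * (n * (n + 3))) / (n * (n + 1) * (n + 3) * (n + 4)) := by
    simp only [lyap, show n ≠ 0 by omega, Nat.succ_ne_zero, if_false]
    push_cast
    field_simp
    ring
  rw [h, sub_self, mul_zero, zero_div, sub_eq_zero] at key
  exact key

section LampertiRates

variable {q : ℕ → ℕ → ℝ≥0∞}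
  (hup : ∀ x : ℕ, 1 ≤ x → q x (x + 1) = ((2 * x + 1 : ℕ) : ℝ≥0∞) / ((4 * x : ℕ) : ℝ≥0∞))
  (hdown : ∀ x : ℕ, 1 ≤ x → q x (x - 1) = ((2 * x - 1 : ℕ) : ℝ≥0∞) / ((4 * x : ℕ) : ℝ≥0∞))

include hup in
lemma q_up_eq_ofReal {x : ℕ} (hx : 1 ≤ x) :
    q x (x + 1) = ENNReal.ofReal ((2 * x + 1) / (4 * x)) := by
  rw [hup x hx, ENNReal.ofReal_div_of_pos (by positivity), ← ENNReal.ofReal_natCast,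
    ← ENNReal.ofReal_natCast]
  push_cast
  rfl

include hdown in
lemma q_down_eq_ofReal {x : ℕ} (hx : 1 ≤ x) :
    q x (x - 1) = ENNReal.ofReal ((2 * x - 1) / (4 * x)) := by
  rw [hdown x hx, ENNReal.ofReal_div_of_pos (by positivity), ← ENNReal.ofReal_natCast,
    ← ENNReal.ofReal_natCast]
  push_cast [Nat.cast_sub (by omega : 1 ≤ 2 * x)]
  rfl

include hup hdown in
lemma spUp_spDown_eq_ofReal_ratio {n : ℕ} (hn : 1 ≤ n) :
    ∃ a b : ℝ, 0 < a ∧ 0 < b ∧ spUp q (n + 1) = ENNReal.ofReal a ∧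
      spDown q (n + 1) = ENNReal.ofReal b ∧ a * (n * (n + 3)) = b * ((n + 1) * (n + 4)) := by
  obtain ⟨x, hx | hx⟩ := Nat.even_or_odd' (n + 1)
  · have hx1 : 1 ≤ x := by omega
    have hnx : (n : ℝ) = 2 * x - 1 := by
      rw [eq_sub_iff_add_eq]; exact_mod_cast hx
    rw [hx, spUp_two_mul, spDown_two_mul, q_down_eq_ofReal hdown hx1,
      show x + 2 = x + 1 + 1 by rfl, q_up_eq_ofReal hup (by omega : 1 ≤ x + 1)]
    refine ⟨_, _, by positivity, ?_, rfl, rfl, ?_⟩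
    · have : (1 : ℝ) ≤ x := by exact_mod_cast hx1
      apply div_pos <;> linarith
    · rw [hnx]; push_cast; field_simp; ring
  · have hx1 : 1 ≤ x := by omega
    have hnx : (n : ℝ) = 2 * x := by exact_mod_cast (by omega : n = 2 * x)
    rw [hx, spUp_two_mul_add_one, spDown_two_mul_add_one, q_up_eq_ofReal hup hx1,
      show x + 1 = x + 2 - 1 by rfl, q_down_eq_ofReal hdown (by omega : 1 ≤ x + 2)]
    refine ⟨_, _, by positivity, ?_, rfl, rfl, ?_⟩
    · push_cast; apply div_pos <;> linarith
    · rw [hnx]; push_cast; field_simp; ring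

include hup in
lemma spUp_zero : spUp q 0 = ENNReal.ofReal (3 / 4) := by
  rw [show spUp q 0 = q 1 (1 + 1) by simp [spUp], q_up_eq_ofReal hup le_rfl]
  norm_num

include hdown in
lemma spDown_one : spDown q 1 = ENNReal.ofReal (3 / 8) := by
  rw [show spDown q 1 = q 2 (2 - 1) by simp [spDown], q_down_eq_ofReal hdown (by norm_num)]
  norm_num

lemma spUp_one : spUp q 1 = q 0 1 := by simp [spUp]

include hup hdown in
lemma spUp_add_one_ne_zero (h0 : 0 < q 0 1) (n : ℕ) : spUp q (n + 1) ≠ 0 := by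
  rcases Nat.eq_zero_or_pos n with rfl | hn
  · rw [spUp_one]; exact h0.ne'
  · obtain ⟨a, b, ha, -, hU, -⟩ := spUp_spDown_eq_ofReal_ratio hup hdown hn
    simpa [hU] using ha

include hup hdown in
lemma spDown_add_one_ne_top (n : ℕ) : spDown q (n + 1) ≠ ⊤ := by
  rcases Nat.eq_zero_or_pos n with rfl | hn
  · simp [spDown_one hdown]
  · obtain ⟨a, b, -, -, -, hD, -⟩ := spUp_spDown_eq_ofReal_ratio hup hdown hn
    simp [hD]

/-- `δ = min (q 0 1) 1` keeps it superharmonic at `1`, however slowly the left leg leaves `0`. -/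
noncomputable def spLyap (q : ℕ → ℕ → ℝ≥0∞) (n : ℕ) : ℝ≥0∞ :=
  ENNReal.ofReal (lyap (min (q 0 1) 1).toReal n)

lemma spLyap_strictAnti (h0 : 0 < q 0 1) : StrictAnti (spLyap q) := by
  have hδ : 0 < (min (q 0 1) 1).toReal :=
    ENNReal.toReal_pos (lt_min h0 one_pos).ne' (min_le_right _ _ |>.trans_lt ENNReal.one_lt_top).ne
  intro m n hmn
  exact (ENNReal.ofReal_lt_ofReal_iff'.mpr
    ⟨lyap_strictAnti hδ hmn, (lyap_nonneg hδ.le n).trans_lt (lyap_strictAnti hδ hmn)⟩)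

include hup hdown in
lemma tsum_spChain_mul_spLyap_le (h0 : 0 < q 0 1) (n : ℕ) :
    ∑' k, spChain q n k * spLyap q k ≤ spLyap q n := by
  unfold spChain
  rcases n with _ | _ | n
  · rw [tsum_jumpChain_nnRate_zero_mul _ _ (by simp [spUp_zero hup]) (by simp [spUp_zero hup])]
    exact (spLyap_strictAnti h0).antitone zero_le_one
  all_goals
    unfold spLyap
    apply tsum_jumpChain_nnRate_succ_mul_ofReal_le _ _ _ (spDown_add_one_ne_top hup hdown _)
      (lyap_nonneg ENNReal.toReal_nonneg)
    intro hu
  · rw [spUp_one] at hu ⊢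
    rw [spDown_one hdown, ENNReal.toReal_ofReal (by norm_num)]
    have hδ : (min (q 0 1) 1).toReal ≤ (q 0 1).toReal := ENNReal.toReal_mono hu (min_le_left _ _)
    norm_num [lyap]
    linarith [(q 0 1).toReal_nonneg]
  · obtain ⟨a, b, ha, hb, hU, hD, hab⟩ :=
      spUp_spDown_eq_ofReal_ratio hup hdown (n := n + 1) (by omega)
    rw [hU, hD, ENNReal.toReal_ofReal ha.le, ENNReal.toReal_ofReal hb.le]
    exact (lyap_harmonic _ (by omega) hab).le

include hup hdown in
/-- The cut-off `spLyap q (max · m)` is superharmonic and strictly so at `m`. -/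
lemma tsum_iterK_spChain_ne_top (h0 : 0 < q 0 1) (m : ℕ) :
    ∑' n, iterK (spChain q) n m m ≠ ⊤ := by
  have hanti := spLyap_strictAnti h0
  refine tsum_iterK_ne_top_of_superharmonic _ (fun k => spLyap q (max k m))
    (tsum_mul_comp_max_le (tsum_jumpChain_le_one _) hanti.antitone
      fun n _ => tsum_spChain_mul_spLyap_le hup hdown h0 n)
    ENNReal.ofReal_ne_top ?_
  rcases m with _ | n
  · simp only [Nat.max_zero]
    rw [tsum_jumpChain_nnRate_zero_mul _ _ (by simp [spUp_zero hup]) (by simp [spUp_zero hup])]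
    exact hanti zero_lt_one
  · rw [max_self]
    exact tsum_jumpChain_nnRate_succ_mul_max_lt _ _ n (spUp_add_one_ne_zero hup hdown h0 n)
      (spDown_add_one_ne_top hup hdown n) (hanti (by omega)) ENNReal.ofReal_ne_top

include hup hdown in
lemma spDrift_eq_of_two_le_enc {c : SpCfg} (hc : 2 ≤ enc c) :
    spDrift q c = (enc c + 1) / (enc c ^ 2 + 2 * enc c - 1) := by
  obtain ⟨n, hn⟩ : ∃ n, enc c = n + 1 := ⟨enc c - 1, by omega⟩
  obtain ⟨a, b, ha, hb, hU, hD, hab⟩ := spUp_spDown_eq_ofReal_ratio hup hdown (n := n) (by omega)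
  rw [spDrift_eq_tsum_spChain, hn, spChain,
    tsum_toReal_jumpChain_nnRate_succ_mul _ _ _ (by simp [hU]) (by simp [hD]), hU, hD,
    ENNReal.toReal_ofReal ha.le, ENNReal.toReal_ofReal hb.le]
  have hn1 : (1 : ℝ) ≤ n := by exact_mod_cast (by omega : 1 ≤ n)
  push_cast
  rw [div_eq_div_iff (by positivity) (by nlinarith)]
  linear_combination hab

include hup hdown in
lemma spDrift_left {x : ℕ} (hx : 1 ≤ x) :
    spDrift q ⟨(x, x + 1), Or.inl rfl⟩ = (2 * (x : ℝ) + 1) / (4 * x * (x + 1) - 1) := by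
  refine (spDrift_eq_of_two_le_enc hup hdown (by simp; omega)).trans ?_
  simp only [enc_left]
  push_cast
  ring

include hup hdown in
lemma spDrift_right {x : ℕ} (hx : 1 ≤ x) :
    spDrift q ⟨(x, x + 2), Or.inr rfl⟩ = ((x : ℝ) + 1) / (2 * x * (x + 2) + 1) := by
  refine (spDrift_eq_of_two_le_enc hup hdown (by simp; omega)).trans ?_
  simp only [enc_right]
  push_cast
  have hx' : (0 : ℝ) ≤ x := x.cast_nonneg
  rw [div_eq_div_iff (by nlinarith) (by positivity)]
  ring

include hup hdown in
lemma tendsto_mul_spDrift_cfgOf :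
    Filter.Tendsto (fun n : ℕ => (n : ℝ) * spDrift q (cfgOf n)) Filter.atTop (nhds 1) := by
  -- `n * spDrift q (cfgOf n) = g n⁻¹` for `n ≥ 2`, with `g` below
  have hg : ContinuousAt (fun t : ℝ => (1 + t) / (1 + 2 * t - t ^ 2)) 0 :=
    ContinuousAt.div (by fun_prop) (by fun_prop) (by norm_num)
  have hlim := hg.tendsto.comp tendsto_inv_atTop_nhds_zero_nat
  norm_num at hlim
  refine hlim.congr' ?_
  filter_upwards [Filter.eventually_ge_atTop 2] with n hn
  have hn' : (2 : ℝ) ≤ n := by exact_mod_cast hn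
  rw [Function.comp_apply, spDrift_eq_of_two_le_enc hup hdown (by rw [enc_cfgOf]; exact hn),
    enc_cfgOf]
  field_simp

end LampertiRates

theorem spider_on_lamperti_transient_general
    (q : ℕ → ℕ → ℝ≥0∞)
    (hup : ∀ x : ℕ, 1 ≤ x → q x (x + 1) = ((2 * x + 1 : ℕ) : ℝ≥0∞) / ((4 * x : ℕ) : ℝ≥0∞))
    (hdown : ∀ x : ℕ, 1 ≤ x → q x (x - 1) = ((2 * x - 1 : ℕ) : ℝ≥0∞) / ((4 * x : ℕ) : ℝ≥0∞))
    (h0 : 0 < q 0 1) :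
    -- the jump chain of the spider is a nearest-neighbour chain in the encoding
    (∀ c d : SpCfg, spRate q c d ≠ 0 → enc d = enc c + 1 ∨ enc d + 1 = enc c) ∧
    -- drift formulas: μ^s(2x) at (x,x+1) and μ^s(2x+1) at (x,x+2)
    (∀ x : ℕ, 1 ≤ x →
      spDrift q ⟨(x, x + 1), Or.inl rfl⟩
        = (2 * (x : ℝ) + 1) / (4 * x * (x + 1) - 1) ∧
      spDrift q ⟨(x, x + 2), Or.inr rfl⟩
        = ((x : ℝ) + 1) / (2 * x * (x + 2) + 1)) ∧
    -- μ^s(n) ∼ 1/n as n → ∞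
    Filter.Tendsto (fun n : ℕ => (n : ℝ) * spDrift q (cfgOf n)) Filter.atTop (nhds 1) ∧
    -- the spider walk is transient: the Green function of its jump chain is finite
    (∀ c : SpCfg, ∑' n : ℕ, iterK (jumpChain (spRate q)) n c c ≠ ∞) := by
  refine ⟨fun c d hcd => ?_, fun x hx => ⟨spDrift_left hup hdown hx, spDrift_right hup hdown hx⟩,
    tendsto_mul_spDrift_cfgOf hup hdown, fun c => ?_⟩
  · rw [spRate_eq_nnRate] at hcd
    exact eq_add_one_or_add_one_eq_of_nnRate_ne_zero _ _ hcd
  · simp only [iterK_jumpChain_spRate]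
    exact tsum_iterK_spChain_ne_top hup hdown h0 (enc c)

theorem spider_on_lamperti_transient
    (q : ℕ → ℕ → ℝ≥0∞)
    (hup : ∀ x : ℕ, 1 ≤ x → q x (x + 1) = ((2 * x + 1 : ℕ) : ℝ≥0∞) / ((4 * x : ℕ) : ℝ≥0∞))
    (hdown : ∀ x : ℕ, 1 ≤ x → q x (x - 1) = ((2 * x - 1 : ℕ) : ℝ≥0∞) / ((4 * x : ℕ) : ℝ≥0∞))
    (h0 : 0 < q 0 1)
    (hnn : ∀ x y : ℕ, y ≠ x + 1 → x ≠ y + 1 → q x y = 0) :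
    -- the jump chain of the spider is a nearest-neighbour chain in the encoding
    (∀ c d : SpCfg, spRate q c d ≠ 0 → enc d = enc c + 1 ∨ enc d + 1 = enc c) ∧
    -- drift formulas: μ^s(2x) at (x,x+1) and μ^s(2x+1) at (x,x+2)
    (∀ x : ℕ, 1 ≤ x →
      spDrift q ⟨(x, x + 1), Or.inl rfl⟩
        = (2 * (x : ℝ) + 1) / (4 * x * (x + 1) - 1) ∧
      spDrift q ⟨(x, x + 2), Or.inr rfl⟩
        = ((x : ℝ) + 1) / (2 * x * (x + 2) + 1)) ∧
    -- μ^s(n) ∼ 1/n as n → ∞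
    Filter.Tendsto (fun n : ℕ => (n : ℝ) * spDrift q (cfgOf n)) Filter.atTop (nhds 1) ∧
    -- the spider walk is transient: the Green function of its jump chain is finite
    (∀ c : SpCfg, ∑' n : ℕ, iterK (jumpChain (spRate q)) n c c ≠ ∞) :=
  spider_on_lamperti_transient_general q hup hdown h0
end
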